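/- arXiv:2110.00099 — 5 statements merged into one kernel-verified Lean document; each statement's English description precedes it below -/
import Mathlib

section
/- Let X and Y be real Banach spaces and let T : Y → X be a bounded linear operator. Then T is completely continuous (i.e. for every weakly convergent sequence (yₙ) in Y, the sequence (Tyₙ) is norm-convergent in X) if and only if for every Lipschitz function f : X → ℝ and every y ∈ Y, whenever f is Gâteaux differentiable at Ty, the composition f ∘ T is weak-Hadamard differentiable at y. -/
open Bornology Filter Metric Set
open scoped NNReal Pointwise

section Defs

variable {X Z : Type*} [NormedAddCommGroup X] [NormedSpace ℝ X]
variable [NormedAddCommGroup Z] [NormedSpace ℝ Z]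

/-- `f` is `β`-differentiable at `x₀` with differential `L`. -/
def BetaDiffAt (β : Set (Set X)) (f : X → Z) (x₀ : X) (L : X →L[ℝ] Z) : Prop :=
  ∀ A ∈ β, ∀ ε > 0, ∃ δ > 0, ∀ t : ℝ, t ≠ 0 → |t| < δ → ∀ u ∈ A,
    ‖t⁻¹ • (f (x₀ + t • u) - f x₀) - L u‖ ≤ ε

/-- The Gâteaux bornology: nonempty finite sets. -/
def gateauxB (X : Type*) [NormedAddCommGroup X] : Set (Set X) :=
  {A | A.Nonempty ∧ A.Finite}

/-- The Fréchet bornology: nonempty bounded sets. -/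
def frechetB (X : Type*) [NormedAddCommGroup X] : Set (Set X) :=
  {A | A.Nonempty ∧ IsBounded A}

/-- The Hadamard bornology: nonempty relatively norm-compact sets. -/
def hadamardB (X : Type*) [NormedAddCommGroup X] : Set (Set X) :=
  {A | A.Nonempty ∧ IsCompact (closure A)}

/-- A bounded set is limited if every weak*-null sequence converges to 0 uniformly on it. -/
def IsLimitedSet (A : Set X) : Prop :=
  IsBounded A ∧ ∀ φ : ℕ → X →L[ℝ] ℝ,
    (∀ x : X, Tendsto (fun n => φ n x) atTop (nhds 0)) →
    ∀ ε > 0, ∃ N : ℕ, ∀ n ≥ N, ∀ x ∈ A, |φ n x| ≤ ε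

/-- The limited bornology: nonempty limited sets. -/
def limitedB (X : Type*) [NormedAddCommGroup X] [NormedSpace ℝ X] : Set (Set X) :=
  {A | A.Nonempty ∧ IsLimitedSet A}

/-- A set is relatively weakly compact if its closure in the weak topology is compact. -/
def RelWeaklyCompact (A : Set X) : Prop :=
  IsCompact (closure (⇑(toWeakSpace ℝ X) '' A) : Set (WeakSpace ℝ X))

/-- The weak-Hadamard bornology: nonempty relatively weakly compact sets. -/
def wHB (X : Type*) [NormedAddCommGroup X] [NormedSpace ℝ X] : Set (Set X) :=
  {A | A.Nonempty ∧ RelWeaklyCompact A}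

/-- A bornology (as a family of sets). -/
def IsBornologyFamily (β : Set (Set X)) : Prop :=
  (∀ A ∈ β, A.Nonempty ∧ IsBounded A) ∧
  (⋃ A ∈ β, A) = univ ∧
  (∀ A ∈ β, ∀ B ∈ β, A ∪ B ∈ β) ∧
  (∀ A ∈ β, ∀ B : Set X, B ⊆ A → B.Nonempty → B ∈ β)

/-- A vector bornology. -/
def IsVectorBornology (β : Set (Set X)) : Prop :=
  IsBornologyFamily β ∧
  (∀ A ∈ β, balancedHull ℝ A ∈ β) ∧
  (∀ A ∈ β, ∀ (x : X) (l : ℝ), (fun z => x + l • z) '' A ∈ β)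

/-- `(x, δ)` witnesses property (S) for the set `A`. -/
def WitnessS (β : Set (Set X)) (A : Set X) (x : ℕ → X) (δ : ℝ) : Prop :=
  (∀ n, x n ∈ A) ∧ 0 < δ ∧
  ∀ nk : ℕ → ℕ, StrictMono nk → ∀ y : ℕ → X,
    (∀ k, ‖y k - x (nk k)‖ ≤ δ) → Set.range y ∉ β

/-- Property (S) for a bornology. -/
def PropertyS (β : Set (Set X)) : Prop :=
  ∀ A : Set X, IsBounded A → A ∉ β → ∃ x δ, WitnessS β A x δ

/-- `T` is `β`-positively homogeneous differentiable at `y` with p.h. differential `R`. -/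
def PHDiffAt {Y : Type*} [NormedAddCommGroup Y] [NormedSpace ℝ Y]
    (β : Set (Set Y)) (T : Y → X) (y : Y) (R : Y → X) : Prop :=
  Continuous R ∧ (∀ c : ℝ, 0 ≤ c → ∀ z, R (c • z) = c • R z) ∧
  ∀ A ∈ β, ∀ ε > 0, ∃ δ > 0, ∀ t : ℝ, 0 < t → t < δ → ∀ z ∈ A,
    ‖t⁻¹ • (T (y + t • z) - T y) - R z‖ ≤ ε

end Defs

/-!
A relatively weakly compact set is weakly sequentially compact: the weak closure of a sequence
lies in a separable closed subspace, on which countably many functionals separate points, so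
this compact closure is metrizable. A completely continuous `T` turns the weakly convergent
subsequences into norm-convergent ones, and for a Lipschitz function a Gâteaux derivative is
uniform along norm-convergent directions; arguing by subsequences, this gives uniformity on
relatively weakly compact sets.

Conversely, if `u n ⇀ y₀` but `‖T (u n) - T y₀‖ ≥ ε`, put `x n = T (u n - y₀)`. The distance to
the complement of the balls `B (T y₀ + τ n • x n, τ n * ε / 4)` is `1`-Lipschitz and, because
`x n ⇀ 0`, vanishes near `T y₀` on every line through `T y₀`, so it has Gâteaux derivative `0`
there. Yet its difference quotients at `T y₀` with steps `τ n → 0` in the directions `x n` stay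
above `ε / 4`, while the corresponding directions `u n - y₀` form, with `0`, a weakly compact set.
-/

open Topology TopologicalSpace

section WeakTopology

variable {E : Type*} [NormedAddCommGroup E] [NormedSpace ℝ E]

theorem tendsto_toWeakSpace_iff {α : Type*} {l : Filter α} {u : α → E} {a : E} :
    Tendsto (fun i => toWeakSpace ℝ E (u i)) l (𝓝 (toWeakSpace ℝ E a)) ↔
      ∀ φ : StrongDual ℝ E, Tendsto (fun i => φ (u i)) l (𝓝 (φ a)) :=
  WeakBilin.tendsto_iff_forall_eval_tendsto _ fun _ _ hab =>
    SeparatingDual.eq_iff_forall_dual_eq.2 fun φ => LinearMap.congr_fun hab φ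

theorem relWeaklyCompact_insert_range {v : ℕ → E} {a : E}
    (hv : ∀ φ : StrongDual ℝ E, Tendsto (fun n => φ (v n)) atTop (𝓝 (φ a))) :
    RelWeaklyCompact (insert a (range v)) := by
  have hcpt := (tendsto_toWeakSpace_iff.2 hv).isCompact_insert_range
  rw [RelWeaklyCompact, image_insert_eq, ← range_comp]
  exact hcpt.closure

theorem eq_zero_of_mem_closure_range_of_norming {ι : Type*} {z : ι → E}
    {φ : ι → StrongDual ℝ E} (hφ : ∀ i, ‖φ i‖ ≤ 1) (hφz : ∀ i, φ i (z i) = ‖z i‖) {x : E}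
    (hx : x ∈ closure (range z)) (hx0 : ∀ i, φ i x = 0) : x = 0 := by
  have hnear : ∀ i, ‖x‖ ≤ 2 * ‖x - z i‖ := fun i => by
    have hzi : ‖z i‖ ≤ ‖x - z i‖ := calc
      ‖z i‖ = φ i (z i - x) := by rw [map_sub, hx0, sub_zero, hφz]
      _ ≤ ‖φ i (z i - x)‖ := Real.le_norm_self _
      _ ≤ ‖z i - x‖ := (φ i).le_of_opNorm_le (hφ i) _ |>.trans_eq (one_mul _)
      _ = ‖x - z i‖ := norm_sub_rev _ _
    linarith [norm_le_norm_sub_add x (z i)]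
  refine norm_le_zero_iff.1 (le_of_forall_pos_lt_add fun ε hε => ?_)
  obtain ⟨_, ⟨i, rfl⟩, hi⟩ := Metric.mem_closure_iff.1 hx (ε / 2) (half_pos hε)
  linarith [hnear i, dist_eq_norm x (z i)]

theorem exists_dual_seq_eq_zero_of_isSeparable {s : Set E} (hs : IsSeparable s) :
    ∃ φ : ℕ → StrongDual ℝ E, ∀ x ∈ s, (∀ k, φ k x = 0) → x = 0 := by
  obtain ⟨c, hc, hsc⟩ := hs
  obtain ⟨z, hz⟩ := (hc.insert 0).exists_eq_range (insert_nonempty 0 c)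
  choose φ hφ hφz using fun k => exists_dual_vector'' ℝ (z k)
  refine ⟨φ, fun x hx => eq_zero_of_mem_closure_range_of_norming hφ (fun k => hφz k) ?_⟩
  exact closure_mono (hz ▸ subset_insert 0 c) (hsc hx)

theorem RelWeaklyCompact.exists_tendsto_subseq {A : Set E} (hA : RelWeaklyCompact A)
    {u : ℕ → E} (hu : ∀ n, u n ∈ A) :
    ∃ a : E, ∃ ψ : ℕ → ℕ, StrictMono ψ ∧
      Tendsto (fun k => toWeakSpace ℝ E (u (ψ k))) atTop (𝓝 (toWeakSpace ℝ E a)) := by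
  set M := (Submodule.span ℝ (range u)).topologicalClosure
  obtain ⟨φ, hφ⟩ := exists_dual_seq_eq_zero_of_isSeparable
    (isSeparable_closure.2 ((countable_range u).isSeparable.span (R := ℝ)))
  set W := closure (range fun n => toWeakSpace ℝ E (u n))
  have hW : IsCompact W := hA.of_isClosed_subset isClosed_closure
    (closure_mono (range_subset_iff.2 fun n => mem_image_of_mem _ (hu n)))
  -- `M` is closed and convex, hence weakly closed
  have hWM : W ⊆ toWeakSpace ℝ E '' M := by
    rw [Submodule.topologicalClosure_coe,
      (Submodule.span ℝ (range u)).convex.toWeakSpace_closure (𝕜 := ℝ)]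
    exact closure_mono (range_subset_iff.2 fun n =>
      mem_image_of_mem _ (Submodule.subset_span (mem_range_self n)))
  have : CompactSpace W := isCompact_iff_compactSpace.1 hW
  have : MetrizableSpace W :=
    Metric.PiNatEmbed.TopologicalSpace.MetrizableSpace.of_countable_separating
      (fun k (w : W) => φ k ((toWeakSpace ℝ E).symm w))
      (fun k => ((WeakBilin.eval_continuous (topDualPairing ℝ E).flip (φ k)).comp
        continuous_subtype_val : Continuous fun w : W => φ k ((toWeakSpace ℝ E).symm w)))
      fun w₁ w₂ hne => by
        contrapose! hne
        obtain ⟨x₁, hx₁, hw₁⟩ := hWM w₁.2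
        obtain ⟨x₂, hx₂, hw₂⟩ := hWM w₂.2
        have := hφ (x₁ - x₂) (M.sub_mem hx₁ hx₂) fun k => by
          simpa [← hw₁, ← hw₂, sub_eq_zero] using hne k
        exact Subtype.ext (hw₁ ▸ hw₂ ▸ congrArg _ (sub_eq_zero.1 this))
  obtain ⟨w, -, ψ, hψ, hconv⟩ := isCompact_univ.tendsto_subseq
    (x := fun n => (⟨_, subset_closure (mem_range_self n)⟩ : W)) fun n => mem_univ _
  exact ⟨(toWeakSpace ℝ E).symm w, ψ, hψ, (continuous_subtype_val.tendsto w).comp hconv⟩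

end WeakTopology

section BetaDiff

variable {X Z : Type*} [NormedAddCommGroup X] [NormedSpace ℝ X]
  [NormedAddCommGroup Z] [NormedSpace ℝ Z] {f : X → Z} {x₀ : X}

theorem betaDiffAt_iff_forall_seq {β : Set (Set X)} {L : X →L[ℝ] Z} :
    BetaDiffAt β f x₀ L ↔ ∀ A ∈ β, ∀ (t : ℕ → ℝ) (u : ℕ → X),
      Tendsto t atTop (𝓝[≠] 0) → (∀ n, u n ∈ A) →
      Tendsto (fun n => (t n)⁻¹ • (f (x₀ + t n • u n) - f x₀) - L (u n)) atTop (𝓝 0) := by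
  constructor
  · intro hL A hA t u ht hu
    rw [NormedAddGroup.tendsto_nhds_zero]
    intro ε hε
    obtain ⟨δ, hδ, hA⟩ := hL A hA (ε / 2) (half_pos hε)
    obtain ⟨ht, hne⟩ := tendsto_nhdsWithin_iff.1 ht
    refine (hne.and (ht.eventually (Metric.ball_mem_nhds 0 hδ))).mono fun n ⟨hn0, hnδ⟩ => ?_
    exact (hA _ hn0 (by simpa using hnδ) _ (hu n)).trans_lt (half_lt_self hε)
  · intro h A hA ε hε
    by_contra! hbad
    choose t ht0 htδ u hu hε_lt using fun n : ℕ => hbad (1 / (n + 1)) Nat.one_div_pos_of_nat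
    have ht : Tendsto t atTop (𝓝[≠] 0) := tendsto_nhdsWithin_iff.2
      ⟨squeeze_zero_norm (fun n => (htδ n).le) tendsto_one_div_add_atTop_nhds_zero_nat,
        .of_forall ht0⟩
    obtain ⟨n, hn⟩ := ((h A hA t u ht hu).eventually (Metric.ball_mem_nhds 0 hε)).exists
    exact (hε_lt n).not_gt (by simpa using hn)

theorem BetaDiffAt.tendsto_slope_of_gateauxB {L : X →L[ℝ] Z}
    (hL : BetaDiffAt (gateauxB X) f x₀ L) (v : X) :
    Tendsto (fun t : ℝ => t⁻¹ • (f (x₀ + t • v) - f x₀)) (𝓝[≠] 0) (𝓝 (L v)) := by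
  rw [Metric.tendsto_nhdsWithin_nhds]
  intro ε hε
  obtain ⟨δ, hδ, hv⟩ := hL {v} ⟨singleton_nonempty v, finite_singleton v⟩ (ε / 2) (half_pos hε)
  refine ⟨δ, hδ, fun t ht0 htδ => ?_⟩
  rw [dist_eq_norm]
  exact (hv t ht0 (by simpa using htδ) v rfl).trans_lt (half_lt_self hε)

theorem betaDiffAt_gateauxB_zero_of_eventually_eq
    (h : ∀ v : X, ∀ᶠ t in 𝓝 (0 : ℝ), f (x₀ + t • v) = f x₀) :
    BetaDiffAt (gateauxB X) f x₀ 0 := by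
  rintro A ⟨-, hA⟩ ε hε
  obtain ⟨δ, hδ, hconst⟩ := Metric.eventually_nhds_iff.1 ((hA.eventually_all).2 fun v _ => h v)
  refine ⟨δ, hδ, fun t _ htδ u hu => ?_⟩
  simp [hconst (by simpa using htδ) u hu, hε.le]

theorem LipschitzWith.tendsto_slope_sub_of_gateauxB {K : ℝ≥0} (hf : LipschitzWith K f)
    {L : X →L[ℝ] Z} (hL : BetaDiffAt (gateauxB X) f x₀ L) {α : Type*} {l : Filter α}
    {t : α → ℝ} (ht : Tendsto t l (𝓝[≠] 0)) {w : α → X} {a : X} (hw : Tendsto w l (𝓝 a)) :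
    Tendsto (fun i => (t i)⁻¹ • (f (x₀ + t i • w i) - f x₀) - L (w i)) l (𝓝 0) := by
  have hlip : Tendsto (fun i => (t i)⁻¹ • (f (x₀ + t i • w i) - f (x₀ + t i • a))) l (𝓝 0) := by
    refine squeeze_zero_norm (fun i => ?_)
      (by simpa using (tendsto_iff_norm_sub_tendsto_zero.1 hw).const_mul (K : ℝ))
    rcases eq_or_ne (t i) 0 with h0 | h0
    · simp [h0]; positivity
    calc ‖(t i)⁻¹ • (f (x₀ + t i • w i) - f (x₀ + t i • a))‖
        ≤ |t i|⁻¹ * (K * ‖t i • w i - t i • a‖) := by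
          rw [norm_smul, norm_inv, Real.norm_eq_abs]
          gcongr
          simpa [dist_eq_norm] using hf.dist_le_mul (x₀ + t i • w i) (x₀ + t i • a)
      _ = K * ‖w i - a‖ := by
          rw [← smul_sub, norm_smul, Real.norm_eq_abs]
          field_simp
  have hdir := (hL.tendsto_slope_of_gateauxB a).comp ht
  have hcont := L.continuous.tendsto a |>.comp hw
  convert hlip.add ((hdir.sub_const (L a)).add (tendsto_const_nhds.sub hcont)) using 1
  · ext i
    simp only [Function.comp_apply, smul_sub]
    abel
  · simp

end BetaDiff

section GateauxBump

variable {E : Type*} [NormedAddCommGroup E] [NormedSpace ℝ E] {x : ℕ → E} {ε : ℝ}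
  {τ : ℕ → ℝ}

theorem eventually_forall_le_norm_smul_sub_smul (hε : 0 < ε) (hx : ∀ n, ε ≤ ‖x n‖)
    (hweak : ∀ φ : StrongDual ℝ E, Tendsto (fun n => φ (x n)) atTop (𝓝 0))
    (hτ : ∀ n, 0 < τ n) (v : E) :
    ∀ᶠ t in 𝓝 (0 : ℝ), ∀ n, τ n * (ε / 4) ≤ ‖t • v - τ n • x n‖ := by
  obtain ⟨φ, hφ, hφv⟩ := exists_dual_vector'' ℝ v
  obtain ⟨N, hN⟩ := eventually_atTop.1
    ((hweak φ).eventually (Metric.ball_mem_nhds 0 (half_pos hε)))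
  -- for `n ≥ N`, average the triangle inequality with the same bound seen through `φ`
  have hlarge : ∀ t : ℝ, ∀ n ≥ N, τ n * (ε / 4) ≤ ‖t • v - τ n • x n‖ := by
    intro t n hn
    have hnorm : τ n * ε - |t| * ‖v‖ ≤ ‖t • v - τ n • x n‖ := by
      have := norm_sub_norm_le (τ n • x n) (t • v)
      rw [norm_sub_rev, norm_smul, norm_smul, Real.norm_of_nonneg (hτ n).le,
        Real.norm_eq_abs] at this
      nlinarith [hx n, hτ n]
    have hdual : |t| * ‖v‖ - τ n * (ε / 2) ≤ ‖t • v - τ n • x n‖ := by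
      have hφn : |φ (x n)| < ε / 2 := by simpa using hN n hn
      have happ : φ (t • v - τ n • x n) = t * ‖v‖ - τ n * φ (x n) := by
        simp [hφv]
      calc |t| * ‖v‖ - τ n * (ε / 2)
          ≤ |t * ‖v‖| - |τ n * φ (x n)| := by
            rw [abs_mul, abs_mul, abs_norm, abs_of_pos (hτ n)]
            nlinarith [hτ n]
        _ ≤ |t * ‖v‖ - τ n * φ (x n)| := abs_sub_abs_le_abs_sub _ _
        _ = ‖φ (t • v - τ n • x n)‖ := by rw [happ, Real.norm_eq_abs]
        _ ≤ ‖t • v - τ n • x n‖ := φ.le_of_opNorm_le hφ _ |>.trans_eq (one_mul _)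
    linarith
  have hsmall : ∀ᶠ t in 𝓝 (0 : ℝ), ∀ n ∈ Finset.range N, τ n * (ε / 4) ≤ ‖t • v - τ n • x n‖ :=
    (Finset.eventually_all _).2 fun n _ => by
      refine (continuousAt_const.eventually_lt (by fun_prop : Continuous fun t : ℝ =>
        ‖t • v - τ n • x n‖).continuousAt ?_).mono fun _ => le_of_lt
      simp only [zero_smul, zero_sub, norm_neg, norm_smul, Real.norm_of_nonneg (hτ n).le]
      nlinarith [hx n, hτ n]
  exact hsmall.mono fun t ht n =>
    if hn : n < N then ht n (Finset.mem_range.2 hn) else hlarge t n (not_lt.1 hn)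

theorem exists_lipschitz_gateaux_zero_bump (x₀ : E) (hε : 0 < ε) (hx : ∀ n, ε ≤ ‖x n‖)
    (hweak : ∀ φ : StrongDual ℝ E, Tendsto (fun n => φ (x n)) atTop (𝓝 0))
    (hτ : ∀ n, 0 < τ n) :
    ∃ f : E → ℝ, LipschitzWith 1 f ∧ f x₀ = 0 ∧ BetaDiffAt (gateauxB E) f x₀ 0 ∧
      ∀ n, τ n * (ε / 4) ≤ f (x₀ + τ n • x n) := by
  set U := ⋃ n, ball (x₀ + τ n • x n) (τ n * (ε / 4))
  have hflat : ∀ v : E, ∀ᶠ t in 𝓝 (0 : ℝ), x₀ + t • v ∈ Uᶜ := fun v =>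
    (eventually_forall_le_norm_smul_sub_smul hε hx hweak hτ v).mono fun t ht => by
      simpa [U, dist_eq_norm] using ht
  have hx₀ : x₀ ∈ Uᶜ := by simpa using (hflat 0).self_of_nhds
  refine ⟨(infDist · Uᶜ), lipschitz_infDist_pt Uᶜ, infDist_zero_of_mem hx₀,
    betaDiffAt_gateauxB_zero_of_eventually_eq fun v => (hflat v).mono fun t ht => ?_,
    fun n => (le_infDist ⟨x₀, hx₀⟩).2 fun y hy => ?_⟩
  · simp only [infDist_zero_of_mem ht, infDist_zero_of_mem hx₀]
  · simp only [U, mem_compl_iff, mem_iUnion, not_exists, mem_ball, not_lt] at hy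
    simpa [dist_comm] using hy n

end GateauxBump

section CompletelyContinuous

variable {X Y : Type*} [NormedAddCommGroup X] [NormedSpace ℝ X]
  [NormedAddCommGroup Y] [NormedSpace ℝ Y]

def CompletelyContinuous (T : Y →L[ℝ] X) : Prop :=
  ∀ (u : ℕ → Y) (y₀ : Y),
    (∀ φ : Y →L[ℝ] ℝ, Tendsto (fun n => φ (u n)) atTop (nhds (φ y₀))) →
    Tendsto (fun n => T (u n)) atTop (nhds (T y₀))

theorem CompletelyContinuous.betaDiffAt_wHB_comp {Z : Type*} [NormedAddCommGroup Z]
    [NormedSpace ℝ Z] {T : Y →L[ℝ] X} (hT : CompletelyContinuous T) {f : X → Z} {K : ℝ≥0}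
    (hf : LipschitzWith K f) {y : Y} {L : X →L[ℝ] Z}
    (hL : BetaDiffAt (gateauxB X) f (T y) L) :
    BetaDiffAt (wHB Y) (f ∘ T) y (L.comp T) := by
  refine betaDiffAt_iff_forall_seq.2 fun A hA t u ht hu =>
    tendsto_of_subseq_tendsto fun ns hns => ?_
  obtain ⟨-, hA⟩ := hA
  obtain ⟨a, ψ, hψ, hconv⟩ := hA.exists_tendsto_subseq fun k => hu (ns k)
  have hTu := hT _ a (tendsto_toWeakSpace_iff.1 hconv)
  refine ⟨ψ, ?_⟩
  simpa using hf.tendsto_slope_sub_of_gateauxB hL ((ht.comp hns).comp hψ.tendsto_atTop) hTu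

theorem CompletelyContinuous.of_betaDiffAt_wHB_comp {T : Y →L[ℝ] X}
    (H : ∀ f : X → ℝ, LipschitzWith 1 f → ∀ y : Y, BetaDiffAt (gateauxB X) f (T y) 0 →
      ∃ L' : Y →L[ℝ] ℝ, BetaDiffAt (wHB Y) (f ∘ T) y L') :
    CompletelyContinuous T := by
  intro u y₀ hu
  by_contra hbad
  obtain ⟨ε, hε, ψ, hψ, hfar⟩ :
      ∃ ε > 0, ∃ ψ : ℕ → ℕ, StrictMono ψ ∧ ∀ k, ε ≤ ‖T (u (ψ k)) - T y₀‖ := by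
    obtain ⟨ε, hε, hfreq⟩ : ∃ ε > 0, ∀ N, ∃ n ≥ N, ε ≤ dist (T (u n)) (T y₀) := by
      simpa [Metric.tendsto_atTop] using hbad
    obtain ⟨ψ, hψ, h⟩ := extraction_of_frequently_atTop (frequently_atTop.2 hfreq)
    exact ⟨ε, hε, ψ, hψ, fun k => by simpa [dist_eq_norm] using h k⟩
  set v : ℕ → Y := fun k => u (ψ k) - y₀
  have hv : ∀ φ : StrongDual ℝ Y, Tendsto (fun k => φ (v k)) atTop (𝓝 0) := fun φ => by
    simpa [v] using ((hu φ).comp hψ.tendsto_atTop).sub_const (φ y₀)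
  set τ : ℕ → ℝ := fun k => 1 / (k + 1)
  have hτ : Tendsto τ atTop (𝓝[≠] 0) := tendsto_nhdsWithin_iff.2
    ⟨tendsto_one_div_add_atTop_nhds_zero_nat, .of_forall fun _ => Nat.one_div_pos_of_nat.ne'⟩
  obtain ⟨f, hf, hf0, hgat, hbump⟩ := exists_lipschitz_gateaux_zero_bump (T y₀) hε
    (x := fun k => T (v k)) (by simpa [v] using hfar) (fun φ => hv (φ.comp T))
    (τ := τ) fun _ => Nat.one_div_pos_of_nat
  obtain ⟨L', hL'⟩ := H f hf y₀ hgat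
  have hA : insert 0 (range v) ∈ wHB Y :=
    ⟨insert_nonempty _ _, relWeaklyCompact_insert_range (by simpa using hv)⟩
  have herr := betaDiffAt_iff_forall_seq.1 hL' _ hA τ v hτ
    fun k => mem_insert_of_mem _ (mem_range_self k)
  have hquot : Tendsto (fun k => (τ k)⁻¹ * f (T y₀ + τ k • T (v k))) atTop (𝓝 0) := by
    simpa [hf0] using herr.add (hv L')
  have hbound : ε / 4 ≤ 0 := ge_of_tendsto hquot (.of_forall fun k =>
    (le_inv_mul_iff₀ Nat.one_div_pos_of_nat).2 (hbump k))
  linarith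

end CompletelyContinuous

theorem completelyContinuous_iff_gateaux_to_weakHadamard_general
    {X Y : Type*} [NormedAddCommGroup X] [NormedSpace ℝ X]
    [NormedAddCommGroup Y] [NormedSpace ℝ Y]
    (T : Y →L[ℝ] X) :
    (∀ (u : ℕ → Y) (y₀ : Y),
        (∀ φ : Y →L[ℝ] ℝ, Tendsto (fun n => φ (u n)) atTop (nhds (φ y₀))) →
        Tendsto (fun n => T (u n)) atTop (nhds (T y₀))) ↔
      ∀ f : X → ℝ, (∃ K : ℝ≥0, LipschitzWith K f) → ∀ y : Y,
        (∃ L : X →L[ℝ] ℝ, BetaDiffAt (gateauxB X) f (T y) L) →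
        ∃ L' : Y →L[ℝ] ℝ, BetaDiffAt (wHB Y) (f ∘ T) y L' :=
  ⟨fun hT _ ⟨_, hf⟩ _ ⟨L, hL⟩ => ⟨L.comp T, CompletelyContinuous.betaDiffAt_wHB_comp hT hf hL⟩,
    fun H => CompletelyContinuous.of_betaDiffAt_wHB_comp fun f hf y hL =>
      H f ⟨1, hf⟩ y ⟨0, hL⟩⟩

/-- a bounded linear operator `T : Y → X` between Banach spaces is completely
continuous iff for every Lipschitz `f : X → ℝ` and every `y`, Gâteaux differentiability of
`f` at `T y` implies weak-Hadamard differentiability of `f ∘ T` at `y`. -/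
theorem completelyContinuous_iff_gateaux_to_weakHadamard
    {X Y : Type*} [NormedAddCommGroup X] [NormedSpace ℝ X] [CompleteSpace X]
    [NormedAddCommGroup Y] [NormedSpace ℝ Y] [CompleteSpace Y]
    (T : Y →L[ℝ] X) :
    (∀ (u : ℕ → Y) (y₀ : Y),
        (∀ φ : Y →L[ℝ] ℝ, Tendsto (fun n => φ (u n)) atTop (nhds (φ y₀))) →
        Tendsto (fun n => T (u n)) atTop (nhds (T y₀))) ↔
      ∀ f : X → ℝ, (∃ K : ℝ≥0, LipschitzWith K f) → ∀ y : Y,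
        (∃ L : X →L[ℝ] ℝ, BetaDiffAt (gateauxB X) f (T y) L) →
        ∃ L' : Y →L[ℝ] ℝ, BetaDiffAt (wHB Y) (f ∘ T) y L' :=
  completelyContinuous_iff_gateaux_to_weakHadamard_general T
end

section
/- Let X be a real Banach space and let A ⊆ X be a bounded set that is not relatively norm-compact. Then there exist a sequence (xₙ)ₙ in A and δ > 0 such that for every strictly increasing sequence (n_k)ₖ of naturals and every sequence (y_k)ₖ in X with ‖y_k − x_{n_k}‖ ≤ δ for all k, the set {y_k : k ∈ ℕ} is not relatively norm-compact. (In other words, the Hadamard bornology, consisting of the nonempty relatively norm-compact subsets of X, satisfies property (S).) -/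
open Bornology Filter Metric Set
open scoped NNReal Pointwise

/-- From a non-totally-bounded set, extract a separated sequence. -/
lemma exists_sep_seq {X : Type*} [PseudoMetricSpace X] {A : Set X}
    (h : ¬ TotallyBounded A) :
    ∃ ε > 0, ∃ x : ℕ → X, (∀ n, x n ∈ A) ∧ ∀ m n, m < n → ε ≤ dist (x m) (x n) := by
  rw [Metric.totallyBounded_iff] at h
  push_neg at h
  obtain ⟨ε, hε, hsep⟩ := h
  have key : ∀ s : Finset X, ∃ a ∈ A, ∀ b ∈ s, ε ≤ dist a b := by
    intro s
    by_contra hc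
    push_neg at hc
    refine hsep s s.finite_toSet ?_
    intro a ha
    obtain ⟨b, hb, hab⟩ := hc a ha
    exact Set.mem_biUnion hb (Metric.mem_ball.mpr hab)
  classical
  choose f hfA hfsep using key
  let g : ℕ → Finset X := fun n => Nat.rec ∅ (fun _ s => insert (f s) s) n
  have hg0 : ∀ n, g (n + 1) = insert (f (g n)) (g n) := fun n => rfl
  refine ⟨ε, hε, fun n => f (g n), fun n => hfA _, ?_⟩
  have hmono : ∀ m n, m ≤ n → g m ⊆ g n := by
    intro m n hmn
    induction n with
    | zero => simpa [Nat.le_zero.mp hmn] using Finset.Subset.refl _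
    | succ k ih =>
      rcases Nat.lt_or_ge m (k + 1) with h' | h'
      · exact (ih (Nat.lt_succ_iff.mp h')).trans (by rw [hg0]; exact Finset.subset_insert _ _)
      · simp [Nat.le_antisymm hmn h']
  intro m n hmn
  have hmem : f (g m) ∈ g n := by
    have : f (g m) ∈ g (m + 1) := by rw [hg0]; exact Finset.mem_insert_self _ _
    exact hmono (m + 1) n hmn this
  rw [dist_comm]
  exact hfsep (g n) _ hmem

/-- the Hadamard bornology (relatively norm-compact sets) satisfies property (S). -/
theorem hadamard_propertyS
    {X : Type*} [NormedAddCommGroup X] [NormedSpace ℝ X] [CompleteSpace X]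
    {A : Set X} (hAbd : IsBounded A) (hA : ¬ IsCompact (closure A)) :
    ∃ (x : ℕ → X) (δ : ℝ), (∀ n, x n ∈ A) ∧ 0 < δ ∧
      ∀ nk : ℕ → ℕ, StrictMono nk → ∀ y : ℕ → X,
        (∀ k, ‖y k - x (nk k)‖ ≤ δ) → ¬ IsCompact (closure (Set.range y)) := by
  have hntb : ¬ TotallyBounded A := by
    intro htb
    exact hA (TotallyBounded.isCompact_of_isClosed htb.closure isClosed_closure)
  obtain ⟨ε, hε, x, hxA, hxsep⟩ := exists_sep_seq hntb
  refine ⟨x, ε / 4, hxA, by linarith, ?_⟩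
  intro nk hnk y hy hcpt
  -- the y k are pairwise ε/2-separated
  have hysep : ∀ j k, j ≠ k → ε / 2 ≤ dist (y j) (y k) := by
    intro j k hjk
    have h1 : dist (y j) (x (nk j)) ≤ ε / 4 := by rw [dist_eq_norm]; exact hy j
    have h2 : dist (y k) (x (nk k)) ≤ ε / 4 := by rw [dist_eq_norm]; exact hy k
    have h3 : ε ≤ dist (x (nk j)) (x (nk k)) := by
      rcases lt_or_gt_of_ne hjk with h | h
      · exact hxsep _ _ (hnk h)
      · rw [dist_comm]; exact hxsep _ _ (hnk h)
    have := dist_triangle (x (nk j)) (y j) (x (nk k))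
    have := dist_triangle (y j) (y k) (x (nk k))
    rw [dist_comm (x (nk j)) (y j)] at *
    linarith
  have htb : TotallyBounded (Set.range y) :=
    hcpt.totallyBounded.subset subset_closure
  rw [Metric.totallyBounded_iff] at htb
  obtain ⟨t, htfin, htcov⟩ := htb (ε / 4) (by linarith)
  have hmap : ∀ k : ℕ, ∃ c ∈ t, y k ∈ Metric.ball c (ε / 4) := by
    intro k
    have := htcov (Set.mem_range_self k)
    simpa using this
  choose c hct hcb using hmap
  obtain ⟨j, -, k, -, hjk, hcjk⟩ :=
    Set.infinite_univ.exists_ne_map_eq_of_mapsTo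
      (fun k _ => hct k) htfin
  have h1 : dist (y j) (c j) < ε / 4 := Metric.mem_ball.mp (hcb j)
  have h2 : dist (y k) (c k) < ε / 4 := Metric.mem_ball.mp (hcb k)
  have h3 := hysep j k hjk
  rw [hcjk] at h1
  have h4 := dist_triangle (y j) (c k) (y k)
  rw [dist_comm (c k) (y k)] at h4
  linarith
end

section
/- Let X be a real Banach space and let A ⊆ X be a bounded set that is not limited. Then there exist a sequence (xₙ)ₙ in A and δ > 0 such that for every strictly increasing sequence (n_k)ₖ of naturals and every sequence (y_k)ₖ in X with ‖y_k − x_{n_k}‖ ≤ δ for all k, the set {y_k : k ∈ ℕ} is not limited. (In other words, the limited bornology, consisting of the nonempty limited subsets of X, satisfies property (S).) -/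
/-!
If `A` is not limited, some weak*-null sequence `φₙ` and some `ε > 0` satisfy `ε < |φₙ(xₙ)|`
for points `xₙ ∈ A`, after passing to a subsequence. By Banach–Steinhaus, `‖φₙ‖ ≤ C`, so with
`δ = ε / 2C` every `δ`-perturbation `y_k` of a subsequence `x_{n_k}` still has
`ε / 2 ≤ |φ_{n_k}(y_k)|`; since `(φ_{n_k})` is again weak*-null, `{y_k}` is not limited.
-/

open Bornology Filter Metric Set
open scoped NNReal Pointwise

open scoped Topology

theorem exists_pos_opNorm_le_of_tendsto {𝕜 E F : Type*} [NontriviallyNormedField 𝕜]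
    [NormedAddCommGroup E] [NormedSpace 𝕜 E] [CompleteSpace E]
    [NormedAddCommGroup F] [NormedSpace 𝕜 F]
    {g : ℕ → E →L[𝕜] F} {f : E → F} (hg : ∀ x, Tendsto (fun n => g n x) atTop (𝓝 (f x))) :
    ∃ C > 0, ∀ n, ‖g n‖ ≤ C := by
  obtain ⟨C, hC⟩ := banach_steinhaus fun x =>
    let ⟨C, hC⟩ := (hg x).norm.bddAbove_range
    ⟨C, fun n => hC ⟨n, rfl⟩⟩
  exact ⟨max C 1, by positivity, fun n => (hC n).trans (le_max_left _ _)⟩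

section Limited

variable {X : Type*} [NormedAddCommGroup X] [NormedSpace ℝ X]

theorem exists_tendsto_zero_lt_abs_of_not_isLimitedSet {A : Set X} (hAbd : IsBounded A)
    (hA : ¬ IsLimitedSet A) :
    ∃ φ : ℕ → X →L[ℝ] ℝ, (∀ z, Tendsto (fun n => φ n z) atTop (𝓝 0)) ∧
      ∃ ε > 0, ∃ x : ℕ → X, (∀ n, x n ∈ A) ∧ ∀ n, ε < |φ n (x n)| := by
  have hunif : ¬ ∀ φ : ℕ → X →L[ℝ] ℝ, (∀ z, Tendsto (fun n => φ n z) atTop (𝓝 0)) →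
      ∀ ε > 0, ∃ N, ∀ n ≥ N, ∀ x ∈ A, |φ n x| ≤ ε := fun h => hA ⟨hAbd, h⟩
  push Not at hunif
  obtain ⟨φ, hφ, ε, hε, hfreq⟩ := hunif
  obtain ⟨m, hm, hxm⟩ := extraction_of_frequently_atTop (frequently_atTop.2 hfreq)
  choose x hxA hx using hxm
  exact ⟨φ ∘ m, fun z => (hφ z).comp hm.tendsto_atTop, ε, hε, x, hxA, hx⟩

theorem not_isLimitedSet_range_of_le_abs {φ : ℕ → X →L[ℝ] ℝ}
    (hφ : ∀ z, Tendsto (fun n => φ n z) atTop (𝓝 0)) {ε : ℝ} (hε : 0 < ε) {y : ℕ → X}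
    (hy : ∀ n, ε ≤ |φ n (y n)|) : ¬ IsLimitedSet (range y) := by
  rintro ⟨-, hunif⟩
  obtain ⟨N, hN⟩ := hunif φ hφ (ε / 2) (half_pos hε)
  linarith [hN N le_rfl (y N) ⟨N, rfl⟩, hy N]

end Limited

/-- the limited bornology satisfies property (S). -/
theorem limited_propertyS
    {X : Type*} [NormedAddCommGroup X] [NormedSpace ℝ X] [CompleteSpace X]
    {A : Set X} (hAbd : IsBounded A) (hA : ¬ IsLimitedSet A) :
    ∃ (x : ℕ → X) (δ : ℝ), (∀ n, x n ∈ A) ∧ 0 < δ ∧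
      ∀ nk : ℕ → ℕ, StrictMono nk → ∀ y : ℕ → X,
        (∀ k, ‖y k - x (nk k)‖ ≤ δ) → ¬ IsLimitedSet (Set.range y) := by
  obtain ⟨φ, hφ, ε, hε, x, hxA, hx⟩ := exists_tendsto_zero_lt_abs_of_not_isLimitedSet hAbd hA
  obtain ⟨C, hC, hφC⟩ := exists_pos_opNorm_le_of_tendsto hφ
  refine ⟨x, ε / (2 * C), hxA, by positivity, fun nk hnk y hy => ?_⟩
  refine not_isLimitedSet_range_of_le_abs (fun z => (hφ z).comp hnk.tendsto_atTop)
    (half_pos hε) fun k => ?_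
  have hclose : |φ (nk k) (y k) - φ (nk k) (x (nk k))| ≤ ε / 2 := by
    calc _ = ‖φ (nk k) (y k - x (nk k))‖ := by rw [map_sub, Real.norm_eq_abs]
      _ ≤ C * (ε / (2 * C)) := (φ (nk k)).le_of_opNorm_le_of_le (hφC _) (hy k)
      _ = ε / 2 := by field_simp
  linarith [hx (nk k), abs_sub_abs_le_abs_sub (φ (nk k) (x (nk k))) (φ (nk k) (y k)),
    abs_sub_comm (φ (nk k) (y k)) (φ (nk k) (x (nk k)))]
end

section
/- Let X be a real Banach space and let A ⊆ X be a bounded set that is not relatively weakly compact. Then there exist a sequence (xₙ)ₙ in A and δ > 0 such that for every strictly increasing sequence (n_k)ₖ of naturals and every sequence (y_k)ₖ in X with ‖y_k − x_{n_k}‖ ≤ δ for all k, the set {y_k : k ∈ ℕ} is not relatively weakly compact. (In other words, the weak-Hadamard bornology, consisting of the nonempty relatively weakly compact subsets of X, satisfies property (S).) -/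
/-!
A bounded set `A` that is not relatively weakly compact has, by Banach–Alaoglu and the embedding
of the weak topology of `X` into the weak* topology of `X**`, a weak* cluster point `F ∈ X**` at
positive distance `d` from `X`. Since the distance from `F` to `span s` is the norm of `F` on the
annihilator of `s`, one can choose alternately functionals `f m` of norm at most `1` with
`F (f m) > d / 2` vanishing on `x 0, …, x (m - 1)`, and points `x n ∈ A` with `f m (x n)` close to
`F (f m)` for `m ≤ n`. The triangular pattern `f m (x n) > d / 4` for `m ≤ n`, `f m (x n) = 0`
for `n < m` survives perturbations of size `d / 16` along any subsequence, and it contradicts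
relative weak compactness: a weak cluster point of the `y k` and a weak* cluster point of the
`f m` would pair to a number both `≥ 3 d / 16` and `≤ d / 16`.
-/

open Bornology Filter Metric Set
open scoped NNReal Pointwise

open NormedSpace

theorem exists_seq_alternating {α β : Type*} {p : Set α → β → Prop} {q : Set β → α → Prop}
    (hp : ∀ s : Set α, s.Finite → ∃ b, p s b) (hq : ∀ t : Set β, t.Finite → ∃ a, q t a) :
    ∃ (a : ℕ → α) (b : ℕ → β), ∀ n, p (a '' Iio n) (b n) ∧ q (b '' Iic n) (a n) := by
  have : Nonempty β := let ⟨b, _⟩ := hp ∅ finite_empty; ⟨b⟩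
  choose! nextB hnextB using hp
  have : Nonempty α := let ⟨a, _⟩ := hq ∅ finite_empty; ⟨a⟩
  choose! nextA hnextA using hq
  let step : Set α × Set β → Set α × Set β := fun st =>
    (insert (nextA (insert (nextB st.1) st.2)) st.1, insert (nextB st.1) st.2)
  let st : ℕ → Set α × Set β := fun n => step^[n] (∅, ∅)
  set b : ℕ → β := fun n => nextB (st n).1
  set a : ℕ → α := fun n => nextA (insert (b n) (st n).2)
  have hst : ∀ n, st n = (a '' Iio n, b '' Iio n) := by
    intro n
    induction n with
    | zero => simp [st]
    | succ n ih =>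
      have hstep : st (n + 1) = (insert (a n) (st n).1, insert (b n) (st n).2) :=
        Function.iterate_succ_apply' step n _
      rw [hstep, ih, Iio_add_one_eq_Iic, ← Iio_insert, image_insert_eq, image_insert_eq]
  have hb : ∀ n, b n = nextB (a '' Iio n) := fun n => by
    change nextB (st n).1 = _
    rw [hst]
  have ha : ∀ n, a n = nextA (b '' Iic n) := fun n => by
    change nextA (insert (b n) (st n).2) = _
    rw [hst, ← Iio_insert, image_insert_eq]
  refine ⟨a, b, fun n => ⟨?_, ?_⟩⟩
  · exact hb n ▸ hnextB _ ((finite_Iio n).image a)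
  · exact ha n ▸ hnextA _ ((finite_Iic n).image b)

section

variable {X : Type*} [NormedAddCommGroup X] [NormedSpace ℝ X]

/-- One half of Grothendieck's double-limit criterion for relative weak compactness. -/
theorem RelWeaklyCompact.le_of_eventually_le {ι κ : Type*} {l : Filter ι} {l' : Filter κ}
    [l.NeBot] [l'.NeBot] {y : ι → X} (hy : RelWeaklyCompact (range y)) {f : κ → StrongDual ℝ X}
    {C : ℝ} (hf : ∀ m, ‖f m‖ ≤ C) {a b : ℝ} (ha : ∀ m, ∀ᶠ k in l, a ≤ f m (y k))
    (hb : ∀ k, ∀ᶠ m in l', f m (y k) ≤ b) : a ≤ b := by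
  obtain ⟨z, -, hz⟩ := hy.exists_mapClusterPt (f := l) (u := toWeakSpace ℝ X ∘ y)
    (tendsto_principal.2 <| .of_forall fun k =>
      subset_closure (mem_image_of_mem _ (mem_range_self k)))
  obtain ⟨g, -, hg⟩ := (WeakDual.isCompact_closedBall (𝕜 := ℝ) 0 C).exists_mapClusterPt
    (f := l') (u := StrongDual.toWeakDual ∘ f)
    (tendsto_principal.2 <| .of_forall fun m => by simpa using hf m)
  set x := (toWeakSpace ℝ X).symm z
  have hcont : ∀ φ : StrongDual ℝ X, Continuous fun w => φ ((toWeakSpace ℝ X).symm w) :=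
    fun φ => WeakBilin.eval_continuous _ φ
  have hfz : ∀ m, a ≤ f m x := fun m =>
    (isClosed_le continuous_const (hcont (f m))).mem_of_mapClusterPt hz (ha m)
  have hgz : a ≤ g x :=
    (isClosed_le continuous_const (WeakDual.eval_continuous x)).mem_of_mapClusterPt
      (s := {ψ : WeakDual ℝ X | a ≤ ψ x}) hg (.of_forall hfz)
  have hgy : ∀ k, g (y k) ≤ b := fun k =>
    (isClosed_le (WeakDual.eval_continuous (y k)) continuous_const).mem_of_mapClusterPt hg (hb k)
  exact hgz.trans <| (isClosed_le (hcont g) continuous_const).mem_of_mapClusterPt hz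
    (.of_forall hgy)

theorem exists_norm_sub_inclusionInDoubleDual_le {F : StrongDual ℝ (StrongDual ℝ X)} {θ : ℝ}
    (hθ : 0 ≤ θ) {s : Set X} (hs : s.Finite)
    (hF : ∀ f : StrongDual ℝ X, (∀ x ∈ s, f x = 0) → F f ≤ θ * ‖f‖) :
    ∃ x, ‖F - inclusionInDoubleDual ℝ X x‖ ≤ θ := by
  have := hs.to_subtype
  set Y : Subspace ℝ (StrongDual ℝ X) :=
    ⨅ x : s, LinearMap.ker ((topDualPairing ℝ X).flip x)
  obtain ⟨g, hgF, hg⟩ := Module.Dual.exists_extension_of_le_seminorm_real Y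
    (F.toLinearMap.comp Y.subtype) (p := θ.toNNReal • normSeminorm ℝ _) fun f => by
      simpa [NNReal.smul_def, hθ] using
        hF f fun x hx => by simpa using (Submodule.mem_iInf _).1 f.2 ⟨x, hx⟩
  -- `F - g` vanishes on the annihilator of the finite set `s`, so it is evaluation at a point.
  have hker : Y ≤ LinearMap.ker (F.toLinearMap - g) := fun f hf => by simp [hgF ⟨f, hf⟩]
  obtain ⟨x, hx⟩ : F.toLinearMap - g ∈ LinearMap.range (topDualPairing ℝ X).flip :=
    Submodule.span_le.2 (range_subset_iff.2 fun x => LinearMap.mem_range_self _ _)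
      (mem_span_of_iInf_ker_le_ker hker)
  refine ⟨x, ContinuousLinearMap.opNorm_le_bound _ hθ fun f => ?_⟩
  have hgf : F f - f x = g f := by
    have := LinearMap.congr_fun hx f
    simp only [LinearMap.flip_apply, topDualPairing_apply, LinearMap.sub_apply,
      ContinuousLinearMap.coe_coe] at this
    linarith
  simpa [NNReal.smul_def, hθ, hgf] using hg f

theorem exists_norm_le_one_forall_eq_zero_lt_apply {F : StrongDual ℝ (StrongDual ℝ X)} {d θ : ℝ}
    (hd : ∀ x, d ≤ ‖F - inclusionInDoubleDual ℝ X x‖) (hθ : θ < d) {s : Set X} (hs : s.Finite) :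
    ∃ f : StrongDual ℝ X, ‖f‖ ≤ 1 ∧ (∀ x ∈ s, f x = 0) ∧ θ < F f := by
  by_contra! h
  have hθ0 : 0 ≤ θ := by simpa using h 0 (by simp) (by simp)
  obtain ⟨x, hx⟩ := exists_norm_sub_inclusionInDoubleDual_le (F := F) hθ0 hs fun f hf => by
    rcases eq_or_ne f 0 with rfl | hf0
    · simp
    have := h (‖f‖⁻¹ • f) (by simp [norm_smul, hf0]) fun x hx => by simp [hf x hx]
    rw [map_smul, smul_eq_mul, inv_mul_le_iff₀ (norm_pos_iff.2 hf0)] at this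
    exact this.trans_eq (mul_comm _ _)
  linarith [hd x]

theorem exists_mem_forall_abs_sub_lt_of_mem_closure {A : Set X} {F : WeakDual ℝ (StrongDual ℝ X)}
    (hF : F ∈ closure (inclusionInDoubleDualWeak ℝ X '' (toWeakSpace ℝ X '' A)))
    {t : Set (StrongDual ℝ X)} (ht : t.Finite) {ε : ℝ} (hε : 0 < ε) :
    ∃ a ∈ A, ∀ f ∈ t, |f a - F f| < ε := by
  have hU : IsOpen (⋂ f ∈ t, {ψ : WeakDual ℝ (StrongDual ℝ X) | |ψ f - F f| < ε}) :=
    ht.isOpen_biInter fun f _ =>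
      isOpen_lt ((WeakDual.eval_continuous f).sub continuous_const).abs continuous_const
  obtain ⟨_, hψ, ⟨_, ⟨a, ha, rfl⟩, rfl⟩⟩ :=
    mem_closure_iff.1 hF _ hU (mem_iInter₂.2 fun f _ => by simpa using hε)
  exact ⟨a, ha, fun f hf => mem_iInter₂.1 hψ f hf⟩

theorem exists_pos_forall_le_norm_sub_inclusionInDoubleDual [CompleteSpace X]
    {F : WeakDual ℝ (StrongDual ℝ X)} (hF : F ∉ range (inclusionInDoubleDualWeak ℝ X)) :
    ∃ d > 0, ∀ x, d ≤ ‖WeakDual.toStrongDual F - inclusionInDoubleDual ℝ X x‖ := by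
  have hclosed : IsClosed (range (inclusionInDoubleDual ℝ X)) :=
    (inclusionInDoubleDualLi ℝ (E := X)).isometry.isUniformInducing.isComplete_range.isClosed
  have hFX : WeakDual.toStrongDual F ∉ range (inclusionInDoubleDual ℝ X) :=
    fun ⟨x, hx⟩ => hF ⟨x, by rw [← WeakDual.toStrongDual_inj]; exact hx⟩
  refine ⟨_, (hclosed.notMem_iff_infDist_pos (range_nonempty _)).1 hFX, fun x =>
    (infDist_le_dist_of_mem (mem_range_self x)).trans_eq ?_⟩
  exact @dist_eq_norm (StrongDual ℝ (StrongDual ℝ X)) _ _ _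

theorem not_relWeaklyCompact_range_of_norm_sub_le {x : ℕ → X} {f : ℕ → StrongDual ℝ X} {θ : ℝ}
    (hθ : 0 < θ) (hf : ∀ m, ‖f m‖ ≤ 1) (hlt : ∀ m n, m ≤ n → θ < f m (x n))
    (hzero : ∀ m n, n < m → f m (x n) = 0) {nk : ℕ → ℕ} (hnk : StrictMono nk) {y : ℕ → X}
    (hy : ∀ k, ‖y k - x (nk k)‖ ≤ θ / 4) : ¬ RelWeaklyCompact (range y) := by
  have hclose : ∀ m k, |f m (y k) - f m (x (nk k))| ≤ θ / 4 := fun m k => by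
    rw [← map_sub]
    exact ((f m).le_opNorm _).trans <| (mul_le_of_le_one_left (norm_nonneg _) (hf m)).trans (hy k)
  intro hrwc
  have := hrwc.le_of_eventually_le (l := atTop) (l' := atTop) hf (a := 3 * θ / 4) (b := θ / 4)
    (fun m => (hnk.tendsto_atTop.eventually_ge_atTop m).mono fun k hk => by
      linarith [hlt m _ hk, (abs_le.1 (hclose m k)).1])
    (fun k => (eventually_gt_atTop (nk k)).mono fun m hm => by
      linarith [hzero m _ hm, (abs_le.1 (hclose m k)).2])
  linarith

end

/-- the weak-Hadamard bornology (relatively weakly compact sets) satisfies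
property (S). -/
theorem weakHadamard_propertyS
    {X : Type*} [NormedAddCommGroup X] [NormedSpace ℝ X] [CompleteSpace X]
    {A : Set X} (hAbd : IsBounded A) (hA : ¬ RelWeaklyCompact A) :
    ∃ (x : ℕ → X) (δ : ℝ), (∀ n, x n ∈ A) ∧ 0 < δ ∧
      ∀ nk : ℕ → ℕ, StrictMono nk → ∀ y : ℕ → X,
        (∀ k, ‖y k - x (nk k)‖ ≤ δ) → ¬ RelWeaklyCompact (Set.range y) := by
  obtain ⟨F, hFA, hFX⟩ : ∃ F ∈ closure (inclusionInDoubleDualWeak ℝ X '' (toWeakSpace ℝ X '' A)),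
      F ∉ range (inclusionInDoubleDualWeak ℝ X) := by
    by_contra! h
    refine hA (isCompact_closure_of_isBounded ℝ X _ ?_ h)
    rwa [(toWeakSpace ℝ X).injective.preimage_image]
  obtain ⟨d, hd0, hd⟩ := exists_pos_forall_le_norm_sub_inclusionInDoubleDual hFX
  obtain ⟨x, f, hxf⟩ := exists_seq_alternating
    (p := fun s f => ‖f‖ ≤ 1 ∧ (∀ x ∈ s, f x = 0) ∧ d / 2 < F f)
    (q := fun t a => a ∈ A ∧ ∀ g ∈ t, |g a - F g| < d / 4)
    (fun s hs => exists_norm_le_one_forall_eq_zero_lt_apply hd (half_lt_self hd0) hs)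
    (fun t ht => exists_mem_forall_abs_sub_lt_of_mem_closure hFA ht (by positivity))
  refine ⟨x, d / 16, fun n => (hxf n).2.1, by positivity, fun nk hnk y hy => ?_⟩
  refine not_relWeaklyCompact_range_of_norm_sub_le (θ := d / 4) (by positivity)
    (fun m => (hxf m).1.1) (fun m n hmn => ?_) (fun m n hnm => (hxf m).1.2.1 _ ⟨n, hnm, rfl⟩) hnk
    (fun k => by linarith [hy k])
  have := abs_lt.1 <| (hxf n).2.2 (f m) ⟨m, hmn, rfl⟩
  linarith [(hxf m).1.2.2]
end

section
/- Let X be a real Banach space, let f : X → ℝ be a continuous convex function, and let x ∈ X. Then f is Gâteaux differentiable at x if and only if f is limited differentiable at x (and in that case the two differentials coincide). -/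
open Bornology Filter Metric Set
open scoped NNReal Pointwise

section Subgrad
open Bornology Filter Metric Set Topology
variable {X : Type*} [NormedAddCommGroup X] [NormedSpace ℝ X]

lemma slope_mono_dir (f : X → ℝ) (hconv : ConvexOn ℝ univ f) (y u : X) {s t : ℝ}
    (hs : s ≠ 0) (ht : t ≠ 0) (hst : s ≤ t) :
    (f (y + s • u) - f y) / s ≤ (f (y + t • u) - f y) / t := by
  have haff : ConvexOn ℝ univ (fun r : ℝ => f (y + r • u)) := by
    have := hconv.comp_affineMap (AffineMap.lineMap (k := ℝ) y (y + u))
    have he : ∀ r : ℝ, (AffineMap.lineMap (k := ℝ) y (y + u)) r = y + r • u := by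
      intro r
      simp [AffineMap.lineMap_apply]
      module
    have : ConvexOn ℝ ((AffineMap.lineMap (k := ℝ) y (y + u)) ⁻¹' univ)
        (f ∘ (AffineMap.lineMap (k := ℝ) y (y + u))) := this
    rw [preimage_univ] at this
    convert this using 2 with r
    rw [Function.comp_apply, he r]
  have := haff.secant_mono (a := (0:ℝ)) (x := s) (y := t)
    (mem_univ _) (mem_univ _) (mem_univ _) hs ht hst
  simpa using this

lemma exists_subgrad (f : X → ℝ) (hc : Continuous f) (hconv : ConvexOn ℝ univ f) (y : X) :
    ∃ g : X →L[ℝ] ℝ, ∀ z, g z ≤ f (y + z) - f y := by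
  classical
  set q : X → ℝ → ℝ := fun z t => (f (y + t • z) - f y) / t with hq
  set S : X → Set ℝ := fun z => q z '' Ioi 0 with hS
  have hmem : ∀ z : X, ∀ t : ℝ, 0 < t → q z t ∈ S z := fun z t ht => ⟨t, ht, rfl⟩
  have hne : ∀ z, (S z).Nonempty := fun z => ⟨q z 1, hmem z 1 one_pos⟩
  have hqmono : ∀ z : X, ∀ s t : ℝ, s ≠ 0 → t ≠ 0 → s ≤ t → q z s ≤ q z t :=
    fun z s t hs ht hst => slope_mono_dir f hconv y z hs ht hst
  have hbdd : ∀ z, BddBelow (S z) := by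
    intro z
    refine ⟨q z (-1), ?_⟩
    rintro r ⟨t, ht, rfl⟩
    exact hqmono z (-1) t (by norm_num) (ne_of_gt ht) (by linarith [mem_Ioi.mp ht])
  set N : X → ℝ := fun z => sInf (S z) with hN
  have hNle : ∀ z t, 0 < t → N z ≤ q z t := fun z t ht => csInf_le (hbdd z) (hmem z t ht)
  have hNle1 : ∀ z, N z ≤ f (y + z) - f y := by
    intro z
    have := hNle z 1 one_pos
    simpa [q] using this
  have hN0 : N 0 = 0 := by
    have h1 : N 0 ≤ 0 := by simpa [q] using hNle 0 1 one_pos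
    have h2 : (0:ℝ) ≤ N 0 := by
      apply le_csInf (hne 0)
      rintro r ⟨t, ht, rfl⟩
      simp [q]
    linarith
  -- positive homogeneity
  have hhom : ∀ c : ℝ, 0 < c → ∀ z, N (c • z) = c * N z := by
    intro c hcpos z
    have hmap1 : ∀ t : ℝ, 0 < t → q (c • z) t = c * q z (t * c) := by
      intro t ht
      have : t • (c • z) = (t * c) • z := by rw [smul_smul]
      rw [hq]
      simp only
      rw [this]
      field_simp
    have h1 : c * N z ≤ N (c • z) := by
      apply le_csInf (hne _)
      rintro r ⟨t, ht, rfl⟩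
      rw [hmap1 t (mem_Ioi.mp ht)]
      have := hNle z (t * c) (mul_pos (mem_Ioi.mp ht) hcpos)
      nlinarith
    have h2 : N (c • z) ≤ c * N z := by
      have : N (c • z) / c ≤ N z := by
        apply le_csInf (hne z)
        rintro r ⟨t, ht, rfl⟩
        have ht' : 0 < t := mem_Ioi.mp ht
        have hm : q (c • z) (t / c) = c * q z t := by
          have h' := hmap1 (t / c) (div_pos ht' hcpos)
          rwa [div_mul_cancel₀ _ (ne_of_gt hcpos)] at h'
        have := hNle (c • z) (t / c) (div_pos ht' hcpos)
        rw [hm] at this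
        rw [div_le_iff₀ hcpos]
        linarith [this]
      calc N (c • z) = (N (c • z) / c) * c := by field_simp
        _ ≤ N z * c := by nlinarith
        _ = c * N z := mul_comm _ _
    linarith
  -- subadditivity
  have hadd : ∀ a b : X, N (a + b) ≤ N a + N b := by
    intro a b
    apply le_of_forall_pos_le_add
    intro ε hε
    obtain ⟨r₁, hr₁S, hr₁⟩ := exists_lt_of_csInf_lt (hne a) (show N a < N a + ε/2 by linarith)
    obtain ⟨r₂, hr₂S, hr₂⟩ := exists_lt_of_csInf_lt (hne b) (show N b < N b + ε/2 by linarith)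
    obtain ⟨t₁, ht₁, rfl⟩ := hr₁S
    obtain ⟨t₂, ht₂, rfl⟩ := hr₂S
    have ht₁' : 0 < t₁ := mem_Ioi.mp ht₁
    have ht₂' : 0 < t₂ := mem_Ioi.mp ht₂
    set t := min t₁ t₂ / 2 with htdef
    have ht : 0 < t := by positivity
    have h2t₁ : 2 * t ≤ t₁ := by
      have := min_le_left t₁ t₂; rw [htdef]; linarith
    have h2t₂ : 2 * t ≤ t₂ := by
      have := min_le_right t₁ t₂; rw [htdef]; linarith
    have hcvx : f (y + t • (a + b)) ≤
        (1/2) * f (y + (2*t) • a) + (1/2) * f (y + (2*t) • b) := by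
      have h := hconv.2 (mem_univ (y + (2*t) • a)) (mem_univ (y + (2*t) • b))
        (by norm_num : (0:ℝ) ≤ 1/2) (by norm_num : (0:ℝ) ≤ 1/2) (by norm_num)
      have hpt : (1/2 : ℝ) • (y + (2*t) • a) + (1/2 : ℝ) • (y + (2*t) • b)
          = y + t • (a + b) := by module
      rw [hpt] at h
      simpa [smul_eq_mul] using h
    have hkey : q (a + b) t ≤ q a (2*t) + q b (2*t) := by
      have e : q a (2*t) + q b (2*t)
          = ((1/2) * f (y + (2*t) • a) + (1/2) * f (y + (2*t) • b) - f y) / t := by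
        rw [hq]; simp only; field_simp; ring
      rw [e, hq]
      simp only
      gcongr
    calc N (a + b) ≤ q (a + b) t := hNle _ t ht
      _ ≤ q a (2*t) + q b (2*t) := hkey
      _ ≤ q a t₁ + q b t₂ := add_le_add
          (hqmono a (2*t) t₁ (by positivity) (ne_of_gt ht₁') h2t₁)
          (hqmono b (2*t) t₂ (by positivity) (ne_of_gt ht₂') h2t₂)
      _ ≤ N a + ε/2 + (N b + ε/2) := add_le_add hr₁.le hr₂.le
      _ = N a + N b + ε := by ring
  -- Hahn-Banach
  obtain ⟨g, -, hg⟩ := exists_extension_of_le_sublinear ((0 : X →ₗ[ℝ] ℝ).toPMap ⊥) N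
    (fun c hc z => hhom c hc z) hadd (by
      rintro ⟨z, hz⟩
      have hz0 : z = 0 := by simpa using hz
      subst hz0
      simp [LinearMap.toPMap, hN0])
  -- continuity
  obtain ⟨δ, hδpos, hδ⟩ := Metric.continuousAt_iff.mp (hc.continuousAt (x := y)) 1 one_pos
  have hbound : ∀ z : X, ‖g z‖ ≤ (2/δ) * ‖z‖ := by
    intro z
    rcases eq_or_ne z 0 with rfl | hz0
    · simp
    · have hzpos : (0:ℝ) < ‖z‖ := norm_pos_iff.mpr hz0
      set c : ℝ := δ / (2 * ‖z‖) with hcdef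
      have hcpos : 0 < c := by positivity
      have hw : ‖c • z‖ = δ / 2 := by
        rw [norm_smul, Real.norm_eq_abs, abs_of_pos hcpos, hcdef]
        field_simp
      have hsmall : ∀ w : X, ‖w‖ = δ/2 → g w ≤ 1 := by
        intro w hwn
        have h1 : g w ≤ N w := hg w
        have h2 : N w ≤ f (y + w) - f y := hNle1 w
        have h3 : dist (y + w) y < δ := by
          rw [dist_eq_norm, add_sub_cancel_left, hwn]
          linarith
        have h4 := hδ h3
        rw [Real.dist_eq] at h4
        have := abs_lt.mp h4
        linarith [this.1, this.2]
      have hub : g (c • z) ≤ 1 := hsmall _ hw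
      have hlb : -1 ≤ g (c • z) := by
        have := hsmall (-(c • z)) (by rwa [norm_neg])
        rw [map_neg] at this
        linarith
      have habs : |g (c • z)| ≤ 1 := abs_le.mpr ⟨hlb, hub⟩
      have hgz : g (c • z) = c * g z := by rw [map_smul]; rfl
      rw [hgz] at habs
      rw [abs_mul, abs_of_pos hcpos, hcdef] at habs
      rw [Real.norm_eq_abs]
      rw [div_mul_eq_mul_div, div_le_iff₀ (by positivity : (0:ℝ) < 2 * ‖z‖)] at habs
      rw [div_mul_eq_mul_div, le_div_iff₀ hδpos]
      nlinarith [abs_nonneg (g z)]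
  refine ⟨LinearMap.mkContinuous g (2/δ) hbound, fun z => ?_⟩
  exact le_trans (hg z) (hNle1 z)

end Subgrad

section Aux
open Bornology Filter Metric Set Topology
open scoped Pointwise

variable {X : Type*} [NormedAddCommGroup X] [NormedSpace ℝ X]

lemma gateaux_slope_ge {f : X → ℝ} {x : X} {L : X →L[ℝ] ℝ}
    (hconv : ConvexOn ℝ univ f) (hG : BetaDiffAt (gateauxB X) f x L)
    (u : X) {t : ℝ} (ht : 0 < t) :
    L u ≤ (f (x + t • u) - f x) / t := by
  by_contra h
  push_neg at h
  obtain ⟨δ, hδpos, H⟩ := hG {u} ⟨singleton_nonempty u, finite_singleton u⟩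
    ((L u - (f (x + t • u) - f x) / t) / 2) (by linarith)
  set s := min (δ / 2) t with hsdef
  have hs : 0 < s := lt_min (by linarith) ht
  have h1 := H s (ne_of_gt hs)
    (by rw [abs_of_pos hs]; exact lt_of_le_of_lt (min_le_left _ _) (by linarith))
    u rfl
  rw [Real.norm_eq_abs, smul_eq_mul, inv_mul_eq_div, abs_le] at h1
  have hmono := slope_mono_dir f hconv x u (ne_of_gt hs) (ne_of_gt ht) (min_le_right (δ/2) t)
  have h2 := h1.1
  linarith

lemma gateaux_subset_limited (A : Set X) (hA : A ∈ gateauxB X) : A ∈ limitedB X := by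
  refine ⟨hA.1, hA.2.isBounded, ?_⟩
  intro φ hφ ε hε
  have hev : ∀ᶠ n in atTop, ∀ a ∈ A, |φ n a| ≤ ε := by
    rw [hA.2.eventually_all]
    intro a ha
    have h0 : Tendsto (fun n => |φ n a|) atTop (𝓝 0) := by
      simpa using (hφ a).abs
    exact (h0.eventually_lt_const hε).mono fun n hn => hn.le
  obtain ⟨N, hN⟩ := eventually_atTop.mp hev
  exact ⟨N, fun n hn a ha => hN n hn a ha⟩

lemma limited_union_neg {A : Set X} (h : IsLimitedSet A) : IsLimitedSet (A ∪ -A) := by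
  obtain ⟨M, hM⟩ := isBounded_iff_forall_norm_le.mp h.1
  constructor
  · rw [isBounded_iff_forall_norm_le]
    refine ⟨M, ?_⟩
    rintro w (hw | hw)
    · exact hM w hw
    · have := hM (-w) (Set.mem_neg.mp hw)
      rwa [norm_neg] at this
  · intro φ hφ ε hε
    obtain ⟨N, hN⟩ := h.2 φ hφ ε hε
    refine ⟨N, fun n hn w hw => ?_⟩
    rcases hw with hw | hw
    · exact hN n hn w hw
    · have := hN n hn (-w) (Set.mem_neg.mp hw)
      rwa [map_neg, abs_neg] at this

end Aux




/-- for continuous convex functions, Gâteaux differentiability and limited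
differentiability coincide (with the same differential). -/
theorem convex_gateaux_iff_limited
    {X : Type*} [NormedAddCommGroup X] [NormedSpace ℝ X] [CompleteSpace X]
    (f : X → ℝ) (hc : Continuous f) (hconv : ConvexOn ℝ Set.univ f) (x : X) :
    ∀ L : X →L[ℝ] ℝ, BetaDiffAt (gateauxB X) f x L ↔ BetaDiffAt (limitedB X) f x L := by
  intro L
  constructor
  · intro hG A hA ε hε
    by_contra hcon
    push_neg at hcon
    have Hn : ∀ n : ℕ, ∃ t : ℝ, t ≠ 0 ∧ |t| < 1 / (n + 1) ∧ ∃ u, u ∈ A ∧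
        ε < |t⁻¹ * (f (x + t • u) - f x) - L u| := by
      intro n
      obtain ⟨t, ht0, htlt, u, hu, hub⟩ := hcon (1 / (n + 1)) (by positivity)
      exact ⟨t, ht0, htlt, u, hu, by simpa [Real.norm_eq_abs, smul_eq_mul] using hub⟩
    choose t ht0 htlt u hu hub using Hn
    set s : ℕ → ℝ := fun n => |t n| with hsdef
    have hspos : ∀ n, 0 < s n := fun n => abs_pos.mpr (ht0 n)
    set v : ℕ → X := fun n => if 0 < t n then u n else -u n with hvdef
    set B : Set X := A ∪ -A with hBdef
    have hvB : ∀ n, v n ∈ B := by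
      intro n
      rw [hvdef]; dsimp only; split
      · exact Or.inl (hu n)
      · exact Or.inr (by simpa [Set.mem_neg] using hu n)
    have hE : ∀ n, ε < (s n)⁻¹ * (f (x + s n • v n) - f x) - L (v n) := by
      intro n
      have hge : L (v n) ≤ (f (x + s n • v n) - f x) / s n :=
        gateaux_slope_ge hconv hG (v n) (hspos n)
      have hE0 : 0 ≤ (s n)⁻¹ * (f (x + s n • v n) - f x) - L (v n) := by
        rw [inv_mul_eq_div]; linarith
      by_cases h : 0 < t n
      · have hs' : s n = t n := abs_of_pos h
        have hv' : v n = u n := if_pos h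
        have heq : (s n)⁻¹ * (f (x + s n • v n) - f x) - L (v n)
            = (t n)⁻¹ * (f (x + t n • u n) - f x) - L (u n) := by rw [hs', hv']
        have := hub n
        rw [← heq, abs_of_nonneg hE0] at this
        exact this
      · have hneg : t n < 0 := lt_of_le_of_ne (not_lt.mp h) (ht0 n)
        have hs' : s n = -t n := abs_of_neg hneg
        have hv' : v n = -u n := if_neg h
        have harg : x + s n • v n = x + t n • u n := by
          rw [hs', hv', neg_smul, smul_neg, neg_neg]
        have heq : (s n)⁻¹ * (f (x + s n • v n) - f x) - L (v n)
            = -((t n)⁻¹ * (f (x + t n • u n) - f x) - L (u n)) := by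
          rw [harg, hs', hv', map_neg, inv_neg]
          ring
        have := hub n
        rw [abs_of_nonpos (by linarith [heq ▸ hE0] : (t n)⁻¹ * (f (x + t n • u n) - f x) - L (u n) ≤ 0)] at this
        linarith [heq ▸ hE0, this, heq]
    have hsg : ∀ n, ∃ gg : X →L[ℝ] ℝ, ∀ z, gg z ≤ f (x + s n • v n + z) - f (x + s n • v n) :=
      fun n => exists_subgrad f hc hconv _
    choose g hg using hsg
    have hkey2 : ∀ n, ε < g n (v n) - L (v n) := by
      intro n
      have h1 := hg n (-(s n • v n))
      rw [add_neg_cancel_right, map_neg, map_smul, smul_eq_mul] at h1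
      have hsn := hspos n
      have h4 : (s n)⁻¹ * (f (x + s n • v n) - f x) ≤ g n (v n) := by
        rw [inv_mul_eq_div, div_le_iff₀ hsn]
        nlinarith
      linarith [hE n]
    set φ : ℕ → X →L[ℝ] ℝ := fun n => g n - L with hφdef
    have hBlim : IsLimitedSet B := limited_union_neg hA.2
    obtain ⟨M, hMb⟩ := isBounded_iff_forall_norm_le.mp hBlim.1
    have hM0 : 0 ≤ M := le_trans (norm_nonneg _) (hMb _ (hvB 0))
    have hy : Tendsto (fun n => x + s n • v n) atTop (nhds x) := by
      have h1 : Tendsto (fun n : ℕ => ‖s n • v n‖) atTop (nhds 0) := by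
        have hub' : ∀ n : ℕ, ‖s n • v n‖ ≤ (1 / (n + 1)) * M := by
          intro n
          rw [norm_smul, Real.norm_eq_abs, abs_of_pos (hspos n)]
          exact mul_le_mul (htlt n).le (hMb _ (hvB n)) (norm_nonneg _) (by positivity)
        have hlim : Tendsto (fun n : ℕ => (1 / (n + 1) : ℝ) * M) atTop (nhds 0) := by
          simpa using tendsto_one_div_add_atTop_nhds_zero_nat.mul_const M
        exact squeeze_zero (fun n => norm_nonneg _) hub' hlim
      have h2 : Tendsto (fun n => s n • v n) atTop (nhds 0) :=
        tendsto_zero_iff_norm_tendsto_zero.mpr h1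
      simpa using tendsto_const_nhds.add h2
    have htend : ∀ w : X, Tendsto (fun n => φ n w) atTop (nhds 0) := by
      intro w
      rw [NormedAddCommGroup.tendsto_nhds_zero]
      intro ε' hε'
      obtain ⟨δ₀, hδ₀pos, H₀⟩ := hG {w, -w}
        ⟨⟨w, Set.mem_insert w _⟩, (Set.finite_singleton (-w)).insert w⟩ (ε' / 4) (by linarith)
      set s₀ := δ₀ / 2 with hs₀def
      have hs₀pos : 0 < s₀ := by rw [hs₀def]; linarith
      have habs₀ : |s₀| < δ₀ := by rw [abs_of_pos hs₀pos, hs₀def]; linarith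
      have hb1 := H₀ s₀ (ne_of_gt hs₀pos) habs₀ w (Set.mem_insert w _)
      have hb2 := H₀ s₀ (ne_of_gt hs₀pos) habs₀ (-w) (Set.mem_insert_of_mem _ rfl)
      rw [Real.norm_eq_abs, smul_eq_mul, inv_mul_eq_div, abs_le] at hb1 hb2
      have hub1 : (f (x + s₀ • w) - f x) / s₀ < L w + ε' / 2 := by
        have := hb1.2; linarith
      have hub2 : (f (x + s₀ • (-w)) - f x) / s₀ < L (-w) + ε' / 2 := by
        have := hb2.2; linarith
      have T1 : Tendsto (fun n => (f (x + s n • v n + s₀ • w) - f (x + s n • v n)) / s₀)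
          atTop (nhds ((f (x + s₀ • w) - f x) / s₀)) := by
        refine Tendsto.div_const ?_ s₀
        exact ((hc.tendsto _).comp (hy.add tendsto_const_nhds)).sub ((hc.tendsto _).comp hy)
      have T2 : Tendsto (fun n => (f (x + s n • v n + s₀ • (-w)) - f (x + s n • v n)) / s₀)
          atTop (nhds ((f (x + s₀ • (-w)) - f x) / s₀)) := by
        refine Tendsto.div_const ?_ s₀
        exact ((hc.tendsto _).comp (hy.add tendsto_const_nhds)).sub ((hc.tendsto _).comp hy)
      have ev1 := T1.eventually_lt_const hub1
      have ev2 := T2.eventually_lt_const hub2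
      filter_upwards [ev1, ev2] with n h1 h2
      have hg1 : g n w ≤ (f (x + s n • v n + s₀ • w) - f (x + s n • v n)) / s₀ := by
        have := hg n (s₀ • w)
        rw [map_smul, smul_eq_mul] at this
        rw [le_div_iff₀ hs₀pos]
        linarith
      have hg2 : g n (-w) ≤ (f (x + s n • v n + s₀ • (-w)) - f (x + s n • v n)) / s₀ := by
        have := hg n (s₀ • (-w))
        rw [map_smul, smul_eq_mul] at this
        rw [le_div_iff₀ hs₀pos]
        linarith
      rw [map_neg] at hg2 h2
      have e1 : g n w - L w < ε' := by linarith
      have e2 : -(g n w - L w) < ε' := by linarith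
      show ‖φ n w‖ < ε'
      rw [hφdef]
      simp only [ContinuousLinearMap.sub_apply]
      rw [Real.norm_eq_abs, abs_lt]
      constructor <;> linarith
    obtain ⟨N, hN⟩ := hBlim.2 φ htend ε hε
    have hNv := hN N le_rfl (v N) (hvB N)
    rw [hφdef] at hNv
    simp only [ContinuousLinearMap.sub_apply] at hNv
    have h5 := hkey2 N
    have h6 := le_abs_self (g N (v N) - L (v N))
    rw [abs_le] at hNv
    linarith [hNv.2]
  · intro hL A hA ε hε
    exact hL A (gateaux_subset_limited A hA) ε hε
end
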